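/- arXiv:1602.02135 — 10 statements merged into one kernel-verified Lean document; each statement's English description precedes it below -/
import Mathlib

section
/- Let f(x) = log((x-1)/(x+1)) on the domain x > 1. Then the quotient g(x) = f(x)/f(x^2) is strictly monotonically increasing on (1, ∞). -/
/-!
With `f = logRatio` we have `f' x = 2 / (x ^ 2 - 1)`, so the derivative of
`f x / f (x ^ 2)` has the sign of `(x ^ 2 + 1) * f (x ^ 2) - 2 * x * f x`. After expanding
the logarithms this is positive by Jensen's inequality for the strictly convex `t ↦ t * log t`
at the points `(x - 1) ^ 2` and `(x + 1) ^ 2`, whose midpoint is `x ^ 2 + 1`.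
-/

open Real Set

lemma strictMonoOn_div_of_hasDerivAt {p q p' q' : ℝ → ℝ} {s : Set ℝ} (hs : Convex ℝ s)
    (hso : IsOpen s) (hp : ∀ x ∈ s, HasDerivAt p (p' x) x)
    (hq : ∀ x ∈ s, HasDerivAt q (q' x) x)
    (hq₀ : ∀ x ∈ s, q x ≠ 0) (hpos : ∀ x ∈ s, 0 < p' x * q x - p x * q' x) :
    StrictMonoOn (fun x => p x / q x) s := by
  have hdiv : ∀ x ∈ s, HasDerivAt (fun x => p x / q x)
      ((p' x * q x - p x * q' x) / q x ^ 2) x :=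
    fun x hx => (hp x hx).fun_div (hq x hx) (hq₀ x hx)
  refine strictMonoOn_of_hasDerivWithinAt_pos hs
    (f' := fun x => (p' x * q x - p x * q' x) / q x ^ 2)
    (fun x hx => (hdiv x hx).continuousAt.continuousWithinAt) (fun x hx => ?_) (fun x hx => ?_)
  all_goals rw [hso.interior_eq] at hx
  · exact (hdiv x hx).hasDerivWithinAt
  · exact div_pos (hpos x hx) (pow_two_pos_of_ne_zero (hq₀ x hx))

lemma sq_add_one_mul_log_lt {x : ℝ} (hx : x ≠ 0) :
    (x ^ 2 + 1) * log (x ^ 2 + 1) < (x - 1) ^ 2 * log (x - 1) + (x + 1) ^ 2 * log (x + 1) := by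
  have hne : (x - 1) ^ 2 ≠ (x + 1) ^ 2 := fun h => hx (by nlinarith)
  have h := strictConvexOn_mul_log.2 (mem_Ici.2 (sq_nonneg (x - 1))) (mem_Ici.2 (sq_nonneg (x + 1)))
    hne (by norm_num : (0 : ℝ) < 1 / 2) (by norm_num : (0 : ℝ) < 1 / 2) (by norm_num)
  have hmid : (1 / 2 : ℝ) • (x - 1) ^ 2 + (1 / 2 : ℝ) • (x + 1) ^ 2 = x ^ 2 + 1 := by
    simp only [smul_eq_mul]; ring
  rw [hmid] at h
  -- `log ((x - 1) ^ 2) = 2 * log (x - 1)` holds for every `x`, since `Real.log` is even.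
  simp only [smul_eq_mul, log_pow] at h
  push_cast at h
  linarith

noncomputable def logRatio (x : ℝ) : ℝ := log ((x - 1) / (x + 1))

lemma hasDerivAt_logRatio {x : ℝ} (h₁ : x ≠ 1) (h₂ : x ≠ -1) :
    HasDerivAt logRatio (2 / (x ^ 2 - 1)) x := by
  have hsub : x - 1 ≠ 0 := sub_ne_zero.2 h₁
  have hadd : x + 1 ≠ 0 := fun h => h₂ (eq_neg_of_add_eq_zero_left h)
  refine ((((hasDerivAt_id' x).sub_const 1).fun_div ((hasDerivAt_id' x).add_const 1) hadd).log
    (div_ne_zero hsub hadd)).congr_deriv ?_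
  rw [show x ^ 2 - 1 = (x - 1) * (x + 1) by ring]
  field_simp
  ring

lemma logRatio_neg {x : ℝ} (hx : 1 < x) : logRatio x < 0 :=
  log_neg (div_pos (by linarith) (by linarith)) ((div_lt_one (by linarith)).2 (by linarith))

lemma two_mul_mul_logRatio_lt {x : ℝ} (hx : 1 < x) :
    2 * x * logRatio x < (x ^ 2 + 1) * logRatio (x ^ 2) := by
  have hsub : x - 1 ≠ 0 := by linarith
  have hadd : x + 1 ≠ 0 := by linarith
  have hjensen := sq_add_one_mul_log_lt (x := x) (by linarith)
  rw [logRatio, logRatio, log_div hsub hadd, log_div (by nlinarith) (by positivity),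
    show x ^ 2 - 1 = (x - 1) * (x + 1) by ring, log_mul hsub hadd]
  linear_combination hjensen

/-- Let `f x = log ((x-1)/(x+1))` on the domain `x > 1`. Then the quotient
`g x = f x / f (x^2)` is strictly monotonically increasing on `(1, ∞)`. -/
theorem strictMonoOn_quotient_log_ratio :
    StrictMonoOn
      (fun x : ℝ =>
        Real.log ((x - 1) / (x + 1)) / Real.log ((x ^ 2 - 1) / (x ^ 2 + 1)))
      (Set.Ioi (1 : ℝ)) := by
  show StrictMonoOn (fun x => logRatio x / logRatio (x ^ 2)) (Ioi 1)
  refine strictMonoOn_div_of_hasDerivAt (convex_Ioi 1) isOpen_Ioi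
    (p' := fun x => 2 / (x ^ 2 - 1)) (q' := fun x => 2 / ((x ^ 2) ^ 2 - 1) * (2 * x))
    (fun x hx => ?_) (fun x hx => ?_) (fun x hx => ?_) (fun x hx => ?_) <;> rw [mem_Ioi] at hx
  · exact hasDerivAt_logRatio hx.ne' (by linarith)
  · have hx₂ : 1 < x ^ 2 := one_lt_pow₀ hx two_ne_zero
    have hsq : HasDerivAt (· ^ 2) (2 * x) x := by simpa using hasDerivAt_pow 2 x
    exact HasDerivAt.comp (h := (· ^ 2)) x (hasDerivAt_logRatio hx₂.ne' (by linarith)) hsq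
  · exact (logRatio_neg (one_lt_pow₀ hx two_ne_zero)).ne
  · have hx₂ : 0 < x ^ 2 - 1 := by nlinarith
    have hfactor :
        2 / (x ^ 2 - 1) * logRatio (x ^ 2) - logRatio x * (2 / ((x ^ 2) ^ 2 - 1) * (2 * x)) =
          2 / ((x ^ 2 - 1) * (x ^ 2 + 1)) *
          ((x ^ 2 + 1) * logRatio (x ^ 2) - 2 * x * logRatio x) := by
      rw [show (x ^ 2) ^ 2 - 1 = (x ^ 2 - 1) * (x ^ 2 + 1) by ring]
      field_simp
    rw [hfactor]
    exact mul_pos (by positivity) (sub_pos.2 (two_mul_mul_logRatio_lt hx))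
end

section
/- With f(x) = log((x-1)/(x+1)) on x > 1 and g(x) = f(x)/f(x^2), the limit of g(x) as x → 1⁺ equals 1, and g(x) > 1 for all x > 1. -/
/-- With `f x = log ((x-1)/(x+1))` on `x > 1` and `g x = f x / f (x^2)`,
the limit of `g x` as `x → 1⁺` equals `1`, and `g x > 1` for all `x > 1`. -/
theorem quotient_log_ratio_limit_and_gt_one :
    Filter.Tendsto
      (fun x : ℝ =>
        Real.log ((x - 1) / (x + 1)) / Real.log ((x ^ 2 - 1) / (x ^ 2 + 1)))
      (nhdsWithin 1 (Set.Ioi 1)) (nhds 1) ∧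
    ∀ x : ℝ, 1 < x →
      1 < Real.log ((x - 1) / (x + 1)) / Real.log ((x ^ 2 - 1) / (x ^ 2 + 1)) := by
  have key : ∀ x : ℝ, 1 < x →
      Real.log ((x - 1) / (x + 1)) < Real.log ((x ^ 2 - 1) / (x ^ 2 + 1)) ∧
      Real.log ((x ^ 2 - 1) / (x ^ 2 + 1)) < 0 := by
    intro x hx
    have h1 : (0:ℝ) < x - 1 := by linarith
    have h2 : (0:ℝ) < x + 1 := by linarith
    have h3 : (0:ℝ) < x ^ 2 - 1 := by nlinarith
    have h4 : (0:ℝ) < x ^ 2 + 1 := by nlinarith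
    constructor
    · apply Real.log_lt_log (div_pos h1 h2)
      rw [div_lt_div_iff₀ h2 h4]
      nlinarith
    · apply Real.log_neg (div_pos h3 h4)
      rw [div_lt_one h4]; linarith
  constructor
  · -- the limit
    have hfbot : Filter.Tendsto (fun x : ℝ => Real.log ((x - 1) / (x + 1)))
        (nhdsWithin 1 (Set.Ioi 1)) Filter.atBot := by
      apply Real.tendsto_log_nhdsGT_zero.comp
      apply tendsto_nhdsWithin_of_tendsto_nhds_of_eventually_within
      · have h : ContinuousAt (fun x : ℝ => (x - 1) / (x + 1)) 1 :=
          ContinuousAt.div (by fun_prop) (by fun_prop) (by norm_num)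
        have h' := h.tendsto
        norm_num at h'
        exact h'.mono_left nhdsWithin_le_nhds
      · filter_upwards [self_mem_nhdsWithin] with x hx
        have hx' : (1:ℝ) < x := hx
        exact Set.mem_Ioi.mpr (div_pos (by linarith) (by linarith))
    have hc : Filter.Tendsto (fun x : ℝ => Real.log ((x + 1) ^ 2 / (x ^ 2 + 1)))
        (nhdsWithin 1 (Set.Ioi 1)) (nhds (Real.log 2)) := by
      have hca : ContinuousAt (fun x : ℝ => (x + 1) ^ 2 / (x ^ 2 + 1)) 1 :=
        ContinuousAt.div (by fun_prop) (by fun_prop) (by norm_num)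
      have h := hca.tendsto
      norm_num at h
      exact ((Real.continuousAt_log (by norm_num)).tendsto.comp h).mono_left
        nhdsWithin_le_nhds
    have hq : Filter.Tendsto
        (fun x : ℝ => Real.log ((x + 1) ^ 2 / (x ^ 2 + 1)) / Real.log ((x - 1) / (x + 1)))
        (nhdsWithin 1 (Set.Ioi 1)) (nhds 0) := by
      have hneg : Filter.Tendsto (fun x : ℝ => -Real.log ((x - 1) / (x + 1)))
          (nhdsWithin 1 (Set.Ioi 1)) Filter.atTop := Filter.tendsto_neg_atTop_iff.mpr hfbot
      have := hc.div_atTop hneg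
      have h0 : -(0:ℝ) = 0 := by norm_num
      have := this.neg
      rw [h0] at this
      convert this using 2 with x
      field_simp
    have hlim : Filter.Tendsto
        (fun x : ℝ => 1 / (1 + Real.log ((x + 1) ^ 2 / (x ^ 2 + 1)) / Real.log ((x - 1) / (x + 1))))
        (nhdsWithin 1 (Set.Ioi 1)) (nhds 1) := by
      have := (tendsto_const_nhds (x := (1:ℝ)) (f := nhdsWithin 1 (Set.Ioi 1))).div
        ((tendsto_const_nhds (x := (1:ℝ))).add hq) (by norm_num)
      have he : (1:ℝ) / (1 + 0) = 1 := by norm_num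
      rw [he] at this
      exact this
    apply hlim.congr'
    filter_upwards [self_mem_nhdsWithin] with x hx
    have hx : (1:ℝ) < x := hx
    have h1 : (0:ℝ) < x - 1 := by linarith
    have h2 : (0:ℝ) < x + 1 := by linarith
    have h4 : (0:ℝ) < x ^ 2 + 1 := by nlinarith
    have hfne : Real.log ((x - 1) / (x + 1)) ≠ 0 :=
      ne_of_lt (Real.log_neg (div_pos h1 h2) (by rw [div_lt_one h2]; linarith))
    have hsplit : Real.log ((x ^ 2 - 1) / (x ^ 2 + 1)) =
        Real.log ((x - 1) / (x + 1)) + Real.log ((x + 1) ^ 2 / (x ^ 2 + 1)) := by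
      rw [← Real.log_mul (by positivity) (by positivity)]
      congr 1
      field_simp
      ring
    have hf2ne : Real.log ((x ^ 2 - 1) / (x ^ 2 + 1)) ≠ 0 := ne_of_lt (key x hx).2
    rw [hsplit] at hf2ne ⊢
    have h5 : 1 + Real.log ((x + 1) ^ 2 / (x ^ 2 + 1)) / Real.log ((x - 1) / (x + 1))
        = (Real.log ((x - 1) / (x + 1)) + Real.log ((x + 1) ^ 2 / (x ^ 2 + 1)))
          / Real.log ((x - 1) / (x + 1)) := by
      field_simp
    rw [h5, one_div_div]
  · intro x hx
    obtain ⟨hlt, hneg⟩ := key x hx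
    rw [lt_div_iff_of_neg hneg]
    linarith
end

section
/- Let ν > 1 and set ν' = √ν. Then log((ν'-1)/(ν'+1)) / log((ν-1)/(ν+1)) ≤ log((√2-1)/(√2+1)) / log(1/3) whenever 1 < ν ≤ 2, and this right-hand quantity is at most 2.151. -/
lemma exponent_ratio_bound_aux_deriv (R x : ℝ) (hx : 0 < x) :
    HasDerivAt (fun y : ℝ => (1 - R) * Real.log y + R * Real.log (1 + y ^ 2) - R * Real.log 2)
      ((1 - R) * x⁻¹ + R * (2 * x / (1 + x ^ 2))) x := by
  have h1 : HasDerivAt Real.log x⁻¹ x := Real.hasDerivAt_log (ne_of_gt hx)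
  have h2 : HasDerivAt (fun y : ℝ => 1 + y ^ 2) (2 * x) x := by
    have := (hasDerivAt_pow 2 x).const_add (1:ℝ)
    simpa using this
  have h3 : HasDerivAt (fun y : ℝ => Real.log (1 + y ^ 2)) (2 * x / (1 + x ^ 2)) x :=
    h2.log (by positivity)
  exact ((h1.const_mul (1 - R)).add (h3.const_mul R)).sub_const (R * Real.log 2)

set_option maxHeartbeats 1000000 in
/-- For `1 < ν ≤ 2`, with `ν' = √ν`,
`log((ν'-1)/(ν'+1)) / log((ν-1)/(ν+1)) ≤ log((√2-1)/(√2+1)) / log(1/3)`,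
and the right-hand quantity is at most `2.151`. -/
theorem exponent_ratio_bound (ν : ℝ) (hν1 : 1 < ν) (hν2 : ν ≤ 2) :
    Real.log ((Real.sqrt ν - 1) / (Real.sqrt ν + 1)) /
        Real.log ((ν - 1) / (ν + 1)) ≤
      Real.log ((Real.sqrt 2 - 1) / (Real.sqrt 2 + 1)) / Real.log (1 / 3) ∧
    Real.log ((Real.sqrt 2 - 1) / (Real.sqrt 2 + 1)) / Real.log (1 / 3) ≤
      2.151 := by
  set s : ℝ := Real.sqrt 2 with hs
  have hs2 : s ^ 2 = 2 := Real.sq_sqrt (by norm_num)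
  have hs_lb : 1.41 < s := by nlinarith [Real.sqrt_nonneg 2]
  have hs_ub : s < 1.5 := by nlinarith [Real.sqrt_nonneg 2]
  have hsp1 : s + 1 ≠ 0 := by positivity
  clear_value s
  -- the endpoint value t₂ = 3 - 2√2
  have ht2eq : (s - 1) / (s + 1) = 3 - 2 * s := by
    rw [div_eq_iff hsp1]; nlinarith
  have ht2pos : (0:ℝ) < 3 - 2 * s := by linarith
  have ht2lt : 3 - 2 * s < 0.18 := by linarith
  have hlog_t2 : Real.log (3 - 2 * s) = - Real.log (3 + 2 * s) := by
    have hinv : (3 - 2 * s) = (3 + 2 * s)⁻¹ := eq_inv_of_mul_eq_one_left (by nlinarith)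
    rw [hinv, Real.log_inv]
  have hlog13 : Real.log (1 / 3 : ℝ) = - Real.log 3 := by
    rw [one_div, Real.log_inv]
  have hlog3pos : (0:ℝ) < Real.log 3 := Real.log_pos (by norm_num)
  set R : ℝ := Real.log ((s - 1) / (s + 1)) / Real.log (1 / 3) with hR
  have hRval : R = Real.log (3 + 2 * s) / Real.log 3 := by
    rw [hR, ht2eq, hlog_t2, hlog13, neg_div_neg_eq]
  clear_value R
  -- bounds on R
  have hR_lb : (5:ℝ) / 4 ≤ R := by
    rw [hRval, le_div_iff₀ hlog3pos]
    have h5 : Real.log 5 ≤ Real.log (3 + 2 * s) :=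
      Real.log_le_log (by norm_num) (by nlinarith)
    have h54 : 5 / 4 * Real.log 3 ≤ Real.log 5 := by
      have h : Real.log (3 ^ (5:ℕ)) ≤ Real.log (5 ^ (4:ℕ)) :=
        Real.log_le_log (by positivity) (by norm_num)
      rw [Real.log_pow, Real.log_pow] at h
      push_cast at h
      linarith
    linarith
  have hR_ub : R ≤ 2.151 := by
    rw [hRval, div_le_iff₀ hlog3pos]
    have h9 : Real.log (3 + 2 * s) ≤ Real.log 9 :=
      Real.log_le_log (by positivity) (by nlinarith)
    have h92 : Real.log 9 = 2 * Real.log 3 := by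
      rw [show (9:ℝ) = 3 ^ (2:ℕ) by norm_num, Real.log_pow]; push_cast; ring
    nlinarith
  refine ⟨?_, hR_ub⟩
  -- main inequality
  set a : ℝ := Real.sqrt ν with ha
  have ha2 : a ^ 2 = ν := Real.sq_sqrt (by linarith)
  have ha1 : 1 < a := by nlinarith [Real.sqrt_nonneg ν]
  have haub : a ≤ s := by
    rw [ha, hs]
    exact Real.sqrt_le_sqrt hν2
  clear_value a
  set t : ℝ := (a - 1) / (a + 1) with ht
  have hap1 : (0:ℝ) < a + 1 := by linarith
  have htpos : 0 < t := div_pos (by linarith) hap1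
  have htle : t ≤ 3 - 2 * s := by
    rw [ht, div_le_iff₀ hap1]; nlinarith
  have htlt18 : t < 0.18 := by linarith
  -- denominator is negative
  have hνp : (0:ℝ) < ν + 1 := by linarith
  have hDneg : Real.log ((ν - 1) / (ν + 1)) < 0 :=
    Real.log_neg (div_pos (by linarith) hνp) ((div_lt_one hνp).2 (by linarith))
  -- rewrite (ν-1)/(ν+1) = 2t/(1+t²)
  have harg : (ν - 1) / (ν + 1) = 2 * t / (1 + t ^ 2) := by
    rw [ht, ← ha2]
    have h1 : (1:ℝ) + ((a - 1) / (a + 1)) ^ 2 ≠ 0 := by positivity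
    field_simp
    ring
  clear_value t
  -- g is antitone on [t, 3-2s]
  have hanti : AntitoneOn
      (fun x : ℝ => (1 - R) * Real.log x + R * Real.log (1 + x ^ 2) - R * Real.log 2)
      (Set.Icc t (3 - 2 * s)) := by
    apply antitoneOn_of_deriv_nonpos (convex_Icc _ _)
    · intro x hx
      exact (exponent_ratio_bound_aux_deriv R x
        (lt_of_lt_of_le htpos hx.1)).continuousAt.continuousWithinAt
    · intro x hx
      rw [interior_Icc] at hx
      have hx0 : 0 < x := lt_trans htpos hx.1
      exact (exponent_ratio_bound_aux_deriv R x hx0).differentiableAt.differentiableWithinAt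
    · intro x hx
      rw [interior_Icc] at hx
      have hx0 : 0 < x := lt_trans htpos hx.1
      have hx18 : x < 0.18 := lt_trans hx.2 (by linarith)
      rw [(exponent_ratio_bound_aux_deriv R x hx0).deriv]
      have hden : (0:ℝ) < 1 + x ^ 2 := by positivity
      have key : (1 - R) * (1 + x ^ 2) + R * (2 * x) * x < 0 := by
        have hx2 : x ^ 2 < 0.0324 := by
          rw [show (0.0324:ℝ) = 0.18 ^ 2 by norm_num]
          exact pow_lt_pow_left₀ hx18 hx0.le two_ne_zero
        have h2 : (1 + R) * x ^ 2 < (1 + R) * 0.0324 :=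
          mul_lt_mul_of_pos_left hx2 (by linarith)
        have h3 : (1 - R) * (1 + x ^ 2) + R * (2 * x) * x = 1 - R + (1 + R) * x ^ 2 := by ring
        rw [h3]
        linarith
      have heq2 : (1 - R) * x⁻¹ + R * (2 * x / (1 + x ^ 2)) =
          ((1 - R) * (1 + x ^ 2) + R * (2 * x) * x) / (x * (1 + x ^ 2)) := by
        field_simp
      rw [heq2]
      exact le_of_lt (div_neg_of_neg_of_pos key (by positivity))
  -- value at the right endpoint is 0
  have hgt2 : (1 - R) * Real.log (3 - 2 * s) + R * Real.log (1 + (3 - 2 * s) ^ 2)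
      - R * Real.log 2 = 0 := by
    have h6 : 1 + (3 - 2 * s) ^ 2 = 6 * (3 - 2 * s) := by nlinarith
    have hl6 : Real.log (6 * (3 - 2 * s)) = Real.log 2 + Real.log 3 + Real.log (3 - 2 * s) := by
      rw [show (6:ℝ) * (3 - 2*s) = 2 * (3 * (3 - 2*s)) by ring,
        Real.log_mul (by norm_num) (ne_of_gt (by nlinarith)),
        Real.log_mul (by norm_num) (ne_of_gt ht2pos)]
      ring
    have hRlog : R * Real.log 3 = - Real.log (3 - 2 * s) := by
      rw [hRval, div_mul_cancel₀ _ (ne_of_gt hlog3pos), hlog_t2, neg_neg]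
    rw [h6, hl6]
    linear_combination hRlog
  -- hence value at t is ≥ 0
  have hgt : 0 ≤ (1 - R) * Real.log t + R * Real.log (1 + t ^ 2) - R * Real.log 2 := by
    have hm : (1 - R) * Real.log (3 - 2 * s) + R * Real.log (1 + (3 - 2 * s) ^ 2)
        - R * Real.log 2 ≤
        (1 - R) * Real.log t + R * Real.log (1 + t ^ 2) - R * Real.log 2 :=
      hanti (Set.left_mem_Icc.2 htle) (Set.right_mem_Icc.2 htle) htle
    linarith [hgt2]
  -- conclude
  rw [div_le_iff_of_neg hDneg, harg]
  have hlog2t : Real.log (2 * t / (1 + t ^ 2)) =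
      Real.log 2 + Real.log t - Real.log (1 + t ^ 2) := by
    rw [Real.log_div (by positivity) (by positivity), Real.log_mul (by norm_num) (ne_of_gt htpos)]
  rw [hlog2t]
  have hfin : R * (Real.log 2 + Real.log t - Real.log (1 + t ^ 2)) =
      -((1 - R) * Real.log t + R * Real.log (1 + t ^ 2) - R * Real.log 2) + Real.log t := by
    ring
  rw [hfin]
  linarith
end

section
/- For η > 0 and any natural number k, the maximum modulus of the Chebyshev polynomial T_k over the complex disk {z : |z| ≤ η} is at most T_k(√(1+η²)), which in turn is at most (η + √(1+η²))^k. -/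
/-! Write `z = cos θ`. Since `|cos θ|² = cos² (Re θ) + sinh² (Im θ)`, we get `|sinh (Im θ)| ≤ |z|`
and `|cos θ| ≤ cosh (Im θ)`, so `|T_k(z)| = |cos (kθ)| ≤ cosh (k Im θ) ≤ cosh (k arsinh |z|)`.
As `cosh (arsinh η) = √(1+η²)`, the right-hand side at `|z| = η` is `T_k(√(1+η²))`, and
`cosh ≤ exp` on `[0, ∞)` bounds it by `exp (arsinh η) ^ k = (η + √(1+η²)) ^ k`. -/

open Real

namespace Complex

theorem sq_norm_cos (θ : ℂ) : ‖cos θ‖ ^ 2 = Real.cos θ.re ^ 2 + Real.sinh θ.im ^ 2 := by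
  have hre : (cos θ).re = Real.cos θ.re * Real.cosh θ.im := by
    rw [cos_eq]; simp [← ofReal_cos, ← ofReal_cosh, ← ofReal_sin, ← ofReal_sinh]
  have him : (cos θ).im = -(Real.sin θ.re * Real.sinh θ.im) := by
    rw [cos_eq]; simp [← ofReal_cos, ← ofReal_cosh, ← ofReal_sin, ← ofReal_sinh]
  rw [Complex.sq_norm, normSq_apply, hre, him]
  nlinarith [Real.sin_sq_add_cos_sq θ.re, Real.cosh_sq θ.im]

theorem abs_sinh_im_le_norm_cos (θ : ℂ) : |Real.sinh θ.im| ≤ ‖cos θ‖ :=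
  abs_le_of_sq_le_sq (by nlinarith [sq_norm_cos θ, sq_nonneg (Real.cos θ.re)]) (norm_nonneg _)

theorem norm_cos_le_cosh_im (θ : ℂ) : ‖cos θ‖ ≤ Real.cosh θ.im :=
  le_of_sq_le_sq (by nlinarith [sq_norm_cos θ, Real.cos_sq_le_one θ.re, Real.cosh_sq' θ.im])
    (cosh_pos _).le

theorem abs_im_le_arsinh_norm_cos (θ : ℂ) : |θ.im| ≤ arsinh ‖cos θ‖ := by
  rw [← sinh_le_sinh, sinh_arsinh, ← abs_sinh]
  exact abs_sinh_im_le_norm_cos θ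

end Complex

theorem Real.cosh_le_exp_of_nonneg {x : ℝ} (hx : 0 ≤ x) : cosh x ≤ exp x :=
  cosh_add_sinh x ▸ le_add_of_nonneg_right (sinh_nonneg_iff.2 hx)

namespace Polynomial.Chebyshev

theorem T_real_eval_sqrt_one_add_sq (η : ℝ) (n : ℤ) :
    (T ℝ n).eval √(1 + η ^ 2) = cosh (n * arsinh η) := by
  rw [← cosh_arsinh, T_real_cosh]

theorem norm_T_complex_eval_le (z : ℂ) (n : ℤ) : ‖(T ℂ n).eval z‖ ≤ cosh (n * arsinh ‖z‖) := by
  obtain ⟨θ, rfl⟩ := Complex.cos_surjective z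
  have him : |θ.im| ≤ |arsinh ‖Complex.cos θ‖| :=
    (Complex.abs_im_le_arsinh_norm_cos θ).trans (le_abs_self _)
  calc ‖(T ℂ n).eval (Complex.cos θ)‖ = ‖Complex.cos (n * θ)‖ := by rw [T_complex_cos]
    _ ≤ cosh (n * θ.im) := by simpa using Complex.norm_cos_le_cosh_im (n * θ)
    _ ≤ cosh (n * arsinh ‖Complex.cos θ‖) := by
      rw [cosh_le_cosh, abs_mul, abs_mul]
      gcongr

end Polynomial.Chebyshev

open Polynomial.Chebyshev in
/-- For `η > 0` and any natural `k`, the modulus of the Chebyshev polynomial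
`T_k` at any point of the complex disk `{z : |z| ≤ η}` is at most
`T_k(√(1+η²))`, which in turn is at most `(η + √(1+η²))^k`. -/
theorem chebyshev_disk_bound (η : ℝ) (hη : 0 < η) (k : ℕ) :
    (∀ z : ℂ, ‖z‖ ≤ η →
      ‖(Polynomial.Chebyshev.T ℂ k).eval z‖ ≤
        (Polynomial.Chebyshev.T ℝ k).eval (Real.sqrt (1 + η ^ 2))) ∧
    (Polynomial.Chebyshev.T ℝ k).eval (Real.sqrt (1 + η ^ 2)) ≤
      (η + Real.sqrt (1 + η ^ 2)) ^ k := by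
  have hk : ((k : ℤ) : ℝ) = k := by norm_cast
  rw [T_real_eval_sqrt_one_add_sq, hk]
  have harsinh : 0 ≤ arsinh η := arsinh_nonneg_iff.2 hη.le
  refine ⟨fun z hz => (norm_T_complex_eval_le z k).trans ?_, ?_⟩
  · rw [hk, cosh_le_cosh, abs_mul, abs_mul, abs_of_nonneg harsinh,
      abs_of_nonneg (arsinh_nonneg_iff.2 (norm_nonneg z))]
    gcongr
  · calc cosh (k * arsinh η) ≤ exp (k * arsinh η) := cosh_le_exp_of_nonneg (by positivity)
      _ = (η + √(1 + η ^ 2)) ^ k := by rw [exp_nat_mul, exp_arsinh]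
end

section
/- Let 0 ≤ a_D ≤ a_I < 1, D = {z ∈ ℂ : |z| ≤ a_D}, I = [-a_I, a_I]. Then there exists a polynomial p of degree at most k with p(1) = 1 such that max_{z ∈ D ∪ I} |p(z)| ≤ 2·((κ_I-1)/(κ_I+1))^η · ((√κ_I - 1)/(√κ_I + 1))^ξ, where κ_I = (1+a_I)/(1-a_I), η = ⌈k·c₀/(δ+c₀)⌉, ξ = ⌊k·δ/(δ+c₀)⌋, δ = 1 - a_D/a_I, and c₀ = log(1+√2). -/
/-! The polynomial is `z ^ η * T_ξ (z / a_I) / T_ξ (1 / a_I)`, of degree `η + ξ ≤ k`.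
On the interval `|T_ξ (z / a_I)| ≤ 1`; on the disk `|T_ξ (z / a_I)| ≤ (1 + √2) ^ ξ`, and the
split of `k` into `η` and `ξ` makes `a_D ^ η (1 + √2) ^ ξ ≤ (a_D e ^ δ) ^ η ≤ a_I ^ η`, the last
step being `t ≤ e ^ (t - 1)` for `t = a_D / a_I`. Both sets are thus bounded by `a_I ^ η`, while
`T_ξ (1 / a_I) = cosh (ξ θ) ≥ e ^ (ξ θ) / 2` with `θ = arcosh (1 / a_I)`, and
`e ^ (-θ) = (√κ_I - 1) / (√κ_I + 1)`, `(κ_I - 1) / (κ_I + 1) = a_I`. -/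

open Polynomial Real

namespace Polynomial.Chebyshev

theorem norm_eval_T_le_of_norm_le_one {R : Type*} [NormedCommRing R] [NormOneClass R]
    {z : R} (hz : ‖z‖ ≤ 1) (n : ℕ) : ‖(T R n).eval z‖ ≤ (1 + √2) ^ n := by
  have hρ : (1 + √2) ^ 2 = 2 * (1 + √2) + 1 := by
    nlinarith [sq_sqrt (show (0 : ℝ) ≤ 2 by norm_num)]
  have h2 : ‖(2 : R)‖ ≤ 2 := by
    simpa [one_add_one_eq_two] using norm_add_le (1 : R) 1
  induction n using Nat.twoStepInduction with
  | zero => simp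
  | one => simpa using hz.trans (le_add_of_nonneg_right (sqrt_nonneg 2))
  | more n ih₀ ih₁ =>
    have hrec : (T R (n + 2 : ℕ)).eval z =
        2 * z * (T R (n + 1 : ℕ)).eval z - (T R n).eval z := by
      simp [T_add_two]
    calc ‖(T R (n + 2 : ℕ)).eval z‖ ≤ 2 * 1 * (1 + √2) ^ (n + 1) + (1 + √2) ^ n := by
          rw [hrec]
          refine (norm_sub_le _ _).trans (add_le_add ?_ ih₀)
          grw [norm_mul_le, norm_mul_le, h2, hz, ih₁]
      _ = (1 + √2) ^ (n + 2) := by linear_combination (-(1 + √2) ^ n) * hρ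

theorem exp_mul_arcosh_div_two_le_eval_T_real (n : ℤ) {x : ℝ} (hx : 1 ≤ x) :
    exp (n * arcosh x) / 2 ≤ (T ℝ n).eval x :=
  calc exp (n * arcosh x) / 2 ≤ cosh (n * arcosh x) := by
        rw [cosh_eq]; linarith [exp_pos (-(n * arcosh x))]
    _ = (T ℝ n).eval x := by rw [← T_real_cosh, cosh_arcosh hx]

theorem inv_eval_T_real_le (n : ℕ) {x : ℝ} (hx : 1 ≤ x) :
    ((T ℝ n).eval x)⁻¹ ≤ 2 * exp (-arcosh x) ^ n := by
  have h := exp_mul_arcosh_div_two_le_eval_T_real n hx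
  rw [Int.cast_natCast] at h
  calc ((T ℝ n).eval x)⁻¹ ≤ (exp (n * arcosh x) / 2)⁻¹ := inv_anti₀ (by positivity) h
    _ = 2 * exp (-arcosh x) ^ n := by rw [inv_div, ← exp_nat_mul, mul_neg, exp_neg]; ring

theorem norm_eval_T_complex_ofReal {x : ℝ} (hx : 1 ≤ x) (n : ℤ) :
    ‖(T ℂ n).eval (x : ℂ)‖ = (T ℝ n).eval x := by
  rw [← complex_ofReal_eval_T, Complex.norm_real,
    norm_of_nonneg (zero_le_one.trans (one_le_eval_T_real n hx))]

end Polynomial.Chebyshev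

open Polynomial.Chebyshev (T)

theorem one_add_div_one_sub_sub_one_div_add_one {a : ℝ} (ha : a < 1) :
    ((1 + a) / (1 - a) - 1) / ((1 + a) / (1 - a) + 1) = a := by
  have : 1 - a ≠ 0 := by linarith
  field_simp
  ring

theorem exp_neg_arcosh_inv {a : ℝ} (ha : 0 < a) (ha1 : a < 1) :
    exp (-arcosh a⁻¹) = (√((1 + a) / (1 - a)) - 1) / (√((1 + a) / (1 - a)) + 1) := by
  set s := √((1 + a) / (1 - a))
  have hs2 : s ^ 2 = (1 + a) / (1 - a) := sq_sqrt (div_nonneg (by linarith) (by linarith))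
  have hs1 : 1 < s := by
    rw [show (1 : ℝ) = √1 by simp]
    exact sqrt_lt_sqrt zero_le_one ((one_lt_div (by linarith)).2 (by linarith))
  have hs2' : s ^ 2 - 1 ≠ 0 := by nlinarith
  have hinv : a⁻¹ = (s ^ 2 + 1) / (s ^ 2 - 1) := by
    have : 1 - a ≠ 0 := by linarith
    rw [eq_div_iff hs2', hs2]
    field_simp
    ring
  have hsqrt : √(a⁻¹ ^ 2 - 1) = 2 * s / (s ^ 2 - 1) := by
    rw [hinv, show ((s ^ 2 + 1) / (s ^ 2 - 1)) ^ 2 - 1 = (2 * s / (s ^ 2 - 1)) ^ 2 by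
      field_simp; ring]
    exact sqrt_sq (div_nonneg (by linarith) (by nlinarith))
  have hone : 1 ≤ a⁻¹ := (one_le_inv₀ ha).2 ha1.le
  rw [exp_neg, exp_arcosh hone, hsqrt, hinv]
  have : s - 1 ≠ 0 := by linarith
  field_simp
  ring

theorem pow_mul_pow_le_pow_of_mul_log_le {a b ρ : ℝ} {η ξ : ℕ} (ha : 0 < a) (hb : 0 ≤ b)
    (hρ : 0 < ρ) (h : ξ * log ρ ≤ η * (1 - b / a)) : b ^ η * ρ ^ ξ ≤ a ^ η := by
  have hbexp : b * exp (1 - b / a) ≤ a :=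
    calc b * exp (1 - b / a) = a * ((b / a) * exp (1 - b / a)) := by field_simp
      _ ≤ a * (exp (b / a - 1) * exp (1 - b / a)) := by
          gcongr; linarith [add_one_le_exp (b / a - 1)]
      _ = a := by rw [← exp_add]; simp
  calc b ^ η * ρ ^ ξ = b ^ η * exp (ξ * log ρ) := by rw [exp_nat_mul, exp_log hρ]
    _ ≤ b ^ η * exp (η * (1 - b / a)) := by gcongr
    _ = (b * exp (1 - b / a)) ^ η := by rw [exp_nat_mul, mul_pow]
    _ ≤ a ^ η := by gcongr

theorem Nat.ceil_add_floor_le {α : Type*} [Field α] [LinearOrder α] [IsStrictOrderedRing α]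
    [FloorSemiring α] {x y : α} {k : ℕ} (hx : 0 ≤ x) (hy : 0 ≤ y) (h : x + y = k) :
    ⌈x⌉₊ + ⌊y⌋₊ ≤ k := by
  have hyk : ⌊y⌋₊ ≤ k := Nat.floor_le_of_le (by linarith)
  refine Nat.add_le_of_le_sub hyk (Nat.ceil_le.2 ?_)
  rw [Nat.cast_sub hyk]
  linarith [Nat.floor_le hy]

theorem floor_mul_le_ceil_mul {c δ : ℝ} (hc : 0 ≤ c) (hδ : 0 ≤ δ) (k : ℕ) :
    (⌊k * δ / (δ + c)⌋₊ : ℝ) * c ≤ ⌈k * c / (δ + c)⌉₊ * δ :=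
  calc (⌊k * δ / (δ + c)⌋₊ : ℝ) * c ≤ k * δ / (δ + c) * c := by
        gcongr; exact Nat.floor_le (by positivity)
    _ = k * c / (δ + c) * δ := by ring
    _ ≤ ⌈k * c / (δ + c)⌉₊ * δ := by gcongr; exact Nat.le_ceil _

theorem norm_pow_mul_norm_eval_T_le_of_norm_le {a b : ℝ} (ha : 0 < a) (hba : b ≤ a) {z : ℂ}
    (hz : ‖z‖ ≤ b) (η ξ : ℕ) :
    ‖z‖ ^ η * ‖(T ℂ ξ).eval ((a : ℂ)⁻¹ * z)‖ ≤ b ^ η * (1 + √2) ^ ξ := by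
  have hw : ‖(a : ℂ)⁻¹ * z‖ ≤ 1 := by
    rw [norm_mul, norm_inv, Complex.norm_real, norm_of_nonneg ha.le, inv_mul_le_one₀ ha]
    exact hz.trans hba
  exact mul_le_mul (pow_le_pow_left₀ (norm_nonneg z) hz η)
    (Chebyshev.norm_eval_T_le_of_norm_le_one hw ξ) (norm_nonneg _)
    (pow_nonneg ((norm_nonneg z).trans hz) η)

theorem norm_pow_mul_norm_eval_T_le_of_im_eq_zero {a : ℝ} (ha : 0 < a) {z : ℂ} (him : z.im = 0)
    (hre : |z.re| ≤ a) (η ξ : ℕ) :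
    ‖z‖ ^ η * ‖(T ℂ ξ).eval ((a : ℂ)⁻¹ * z)‖ ≤ a ^ η := by
  have hz : (a : ℂ)⁻¹ * z = ((a⁻¹ * z.re : ℝ) : ℂ) := by
    conv_lhs => rw [← Complex.re_add_im z, him]
    push_cast
    ring
  have hT : ‖(T ℂ ξ).eval ((a : ℂ)⁻¹ * z)‖ ≤ 1 := by
    rw [hz, ← Chebyshev.complex_ofReal_eval_T, Complex.norm_real, norm_eq_abs]
    refine Chebyshev.abs_eval_T_real_le_one _ ?_
    rw [abs_mul, abs_inv, abs_of_pos ha]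
    exact (inv_mul_le_one₀ ha).2 hre
  calc ‖z‖ ^ η * ‖(T ℂ ξ).eval ((a : ℂ)⁻¹ * z)‖ ≤ a ^ η * 1 := by
        gcongr
        exact (Complex.abs_re_eq_norm.2 him) ▸ hre
    _ = a ^ η := mul_one _

noncomputable def diskIntervalPoly (a : ℂ) (η ξ : ℕ) : ℂ[X] :=
  C ((T ℂ ξ).eval a⁻¹)⁻¹ * (X ^ η * (T ℂ ξ).comp (C a⁻¹ * X))

section diskIntervalPoly

variable (a : ℂ) (η ξ : ℕ)

theorem degree_diskIntervalPoly_le : (diskIntervalPoly a η ξ).degree ≤ ↑(η + ξ) := by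
  refine degree_le_of_natDegree_le ((natDegree_C_mul_le _ _).trans (natDegree_mul_le.trans ?_))
  rw [natDegree_X_pow, natDegree_comp, Chebyshev.natDegree_T, Int.natAbs_natCast]
  exact Nat.add_le_add_left (mul_le_of_le_one_right'
    ((natDegree_C_mul_le _ _).trans natDegree_X_le)) _

theorem diskIntervalPoly_eval_one {a : ℂ} (ha : (T ℂ ξ).eval a⁻¹ ≠ 0) :
    (diskIntervalPoly a η ξ).eval 1 = 1 := by
  simp [diskIntervalPoly, ha]

theorem norm_eval_diskIntervalPoly (z : ℂ) :
    ‖(diskIntervalPoly a η ξ).eval z‖ =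
      ‖z‖ ^ η * ‖(T ℂ ξ).eval (a⁻¹ * z)‖ / ‖(T ℂ ξ).eval a⁻¹‖ := by
  simp [diskIntervalPoly]
  ring

end diskIntervalPoly

theorem disk_interval_approx_general (aD aI : ℝ) (k : ℕ)
    (h1 : aD ≤ aI) (h2 : aI < 1) (h3 : 0 < aI) :
    ∃ p : Polynomial ℂ, p.degree ≤ k ∧ p.eval 1 = 1 ∧
      ∀ z : ℂ, (‖z‖ ≤ aD ∨ (z.im = 0 ∧ |z.re| ≤ aI)) →
        ‖p.eval z‖ ≤
          2 * (((1 + aI) / (1 - aI) - 1) / ((1 + aI) / (1 - aI) + 1)) ^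
              (⌈(k : ℝ) * Real.log (1 + Real.sqrt 2) /
                ((1 - aD / aI) + Real.log (1 + Real.sqrt 2))⌉₊) *
            ((Real.sqrt ((1 + aI) / (1 - aI)) - 1) /
              (Real.sqrt ((1 + aI) / (1 - aI)) + 1)) ^
              (⌊(k : ℝ) * (1 - aD / aI) /
                ((1 - aD / aI) + Real.log (1 + Real.sqrt 2))⌋₊) := by
  set c₀ := log (1 + √2)
  set δ := 1 - aD / aI
  set η := ⌈(k : ℝ) * c₀ / (δ + c₀)⌉₊
  set ξ := ⌊(k : ℝ) * δ / (δ + c₀)⌋₊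
  have hc₀ : 0 < c₀ := log_pos (by linarith [sqrt_pos.2 two_pos])
  have hδ : 0 ≤ δ := sub_nonneg.2 ((div_le_one h3).2 h1)
  have hx : 1 ≤ aI⁻¹ := (one_le_inv₀ h3).2 h2.le
  have hT1 : 1 ≤ (T ℝ ξ).eval aI⁻¹ := Chebyshev.one_le_eval_T_real ξ hx
  have hT : ‖(T ℂ ξ).eval (aI : ℂ)⁻¹‖ = (T ℝ ξ).eval aI⁻¹ := by
    rw [← Complex.ofReal_inv]
    exact Chebyshev.norm_eval_T_complex_ofReal hx ξ
  have hηξ : η + ξ ≤ k :=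
    Nat.ceil_add_floor_le (by positivity) (by positivity) (by field_simp; ring)
  have hnum : ∀ z : ℂ, (‖z‖ ≤ aD ∨ (z.im = 0 ∧ |z.re| ≤ aI)) →
      ‖z‖ ^ η * ‖(T ℂ ξ).eval ((aI : ℂ)⁻¹ * z)‖ ≤ aI ^ η := by
    rintro z (hD | ⟨him, hre⟩)
    · exact (norm_pow_mul_norm_eval_T_le_of_norm_le h3 h1 hD η ξ).trans
        (pow_mul_pow_le_pow_of_mul_log_le h3 ((norm_nonneg z).trans hD) (by positivity)
          (floor_mul_le_ceil_mul hc₀.le hδ k))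
    · exact norm_pow_mul_norm_eval_T_le_of_im_eq_zero h3 him hre η ξ
  rw [one_add_div_one_sub_sub_one_div_add_one h2, ← exp_neg_arcosh_inv h3 h2]
  refine ⟨diskIntervalPoly aI η ξ, (degree_diskIntervalPoly_le _ _ _).trans
    (WithBot.coe_le_coe.2 hηξ), diskIntervalPoly_eval_one η ξ ?_, fun z hz => ?_⟩
  · rw [← norm_ne_zero_iff, hT]
    exact (zero_lt_one.trans_le hT1).ne'
  rw [norm_eval_diskIntervalPoly, hT, div_eq_mul_inv]
  calc ‖z‖ ^ η * ‖(T ℂ ξ).eval ((aI : ℂ)⁻¹ * z)‖ * ((T ℝ ξ).eval aI⁻¹)⁻¹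
      ≤ aI ^ η * (2 * exp (-arcosh aI⁻¹) ^ ξ) :=
        mul_le_mul (hnum z hz) (Chebyshev.inv_eval_T_real_le ξ hx)
          (inv_nonneg.2 (zero_le_one.trans hT1)) (by positivity)
    _ = 2 * aI ^ η * exp (-arcosh aI⁻¹) ^ ξ := by ring

/-- Disk-and-interval approximation: for `0 ≤ a_D ≤ a_I < 1`, with
`D = {z ∈ ℂ : |z| ≤ a_D}` and `I = [-a_I, a_I] ⊂ ℝ`, there exists a
polynomial `p` of degree at most `k` with `p(1) = 1` such that
`max_{z ∈ D ∪ I} |p(z)| ≤ 2·((κ_I-1)/(κ_I+1))^η · ((√κ_I-1)/(√κ_I+1))^ξ`,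
where `κ_I = (1+a_I)/(1-a_I)`, `η = ⌈k·c₀/(δ+c₀)⌉`, `ξ = ⌊k·δ/(δ+c₀)⌋`,
`δ = 1 - a_D/a_I` and `c₀ = log(1+√2)`. -/
theorem disk_interval_approx (aD aI : ℝ) (k : ℕ)
    (h0 : 0 ≤ aD) (h1 : aD ≤ aI) (h2 : aI < 1) (h3 : 0 < aI) :
    ∃ p : Polynomial ℂ, p.degree ≤ k ∧ p.eval 1 = 1 ∧
      ∀ z : ℂ, (‖z‖ ≤ aD ∨ (z.im = 0 ∧ |z.re| ≤ aI)) →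
        ‖p.eval z‖ ≤
          2 * (((1 + aI) / (1 - aI) - 1) / ((1 + aI) / (1 - aI) + 1)) ^
              (⌈(k : ℝ) * Real.log (1 + Real.sqrt 2) /
                ((1 - aD / aI) + Real.log (1 + Real.sqrt 2))⌉₊) *
            ((Real.sqrt ((1 + aI) / (1 - aI)) - 1) /
              (Real.sqrt ((1 + aI) / (1 - aI)) + 1)) ^
              (⌊(k : ℝ) * (1 - aD / aI) /
                ((1 - aD / aI) + Real.log (1 + Real.sqrt 2))⌋₊) :=
  disk_interval_approx_general aD aI k h1 h2 h3
end

section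
/- Let κ ≥ 1, c₀ = log(1+√2), and for γ ∈ [√κ, κ] define δ(γ) = (γ² - κ)/((γ+κ)(γ+1)). Then ((γ-1)/(γ+1))^{c₀/(c₀+δ(γ))} · ((√γ-1)/(√γ+1))^{δ(γ)/(c₀+δ(γ))} ≤ (1 - 1/(κ^{2/3}+1))^{0.209}. -/
/-!
Write `κ = x³`. Since `log ((t - 1) / (t + 1)) ≤ -2 / (t + 1)` and
`log (1 - 1 / (x² + 1)) ≥ -1 / x²`, taking logarithms reduces the claim to
`0.209 / x² ≤ 2 c₀ / ((γ + 1)(c₀ + δ)) + 2 δ / ((√γ + 1)(c₀ + δ))`, and one summand suffices.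
If `γ ≤ 4x²`, then `γ + 1 ≤ (65/16) x²` (using also `γ ≤ x³`), and the first summand wins
because `c₀ ≥ 3/4` and `δ ≤ 1`. If `γ > 4x²`, then `γ² ≥ 16κ` forces `δ ≥ 15γ / (64κ)`,
and the second summand is at least `15√γ / (128 x³) ≥ 30 / (128 x²)`.
-/

open Real

namespace ConvergenceFactor

lemma three_quarters_le_log_one_add_sqrt_two : 3 / 4 ≤ log (1 + √2) := by
  rw [le_log_iff_exp_le (by positivity)]
  have hsqrt : (1.4 : ℝ) ≤ √2 := by
    rw [le_sqrt (by norm_num) (by norm_num)]; norm_num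
  have hpow : exp (3 / 4) ^ 4 = exp 1 ^ 3 := by
    rw [← exp_nat_mul, ← exp_nat_mul]; norm_num
  refine le_of_pow_le_pow_left₀ four_ne_zero (by positivity) ?_
  calc exp (3 / 4) ^ 4 = exp 1 ^ 3 := hpow
    _ ≤ 2.7182818286 ^ 3 := by gcongr; exact exp_one_lt_d9.le
    _ ≤ (1 + 1.4) ^ 4 := by norm_num
    _ ≤ (1 + √2) ^ 4 := by gcongr

lemma log_one_add_sqrt_two_le_one : log (1 + √2) ≤ 1 := by
  rw [log_le_iff_le_exp (by positivity)]
  have hsqrt : √2 ≤ 1.5 := by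
    rw [sqrt_le_left (by norm_num)]; norm_num
  linarith [exp_one_gt_d9]

lemma log_sub_one_div_add_one_le {t : ℝ} (ht : 1 < t) :
    log ((t - 1) / (t + 1)) ≤ -(2 / (t + 1)) :=
  calc log ((t - 1) / (t + 1)) ≤ (t - 1) / (t + 1) - 1 :=
        log_le_sub_one_of_pos (div_pos (by linarith) (by linarith))
    _ = -(2 / (t + 1)) := by field_simp; ring

lemma neg_inv_le_log_one_sub_inv_add_one {u : ℝ} (hu : 0 < u) :
    -(1 / u) ≤ log (1 - 1 / (u + 1)) := by
  have h : 1 - 1 / (u + 1) = (1 + 1 / u)⁻¹ := by field_simp; ring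
  rw [h, log_inv, neg_le_neg_iff]
  exact (log_le_sub_one_of_pos (by positivity)).trans_eq (by ring)

lemma sub_one_div_add_one_rpow_mul_rpow_le {s t u v w e : ℝ} (hs : 1 < s) (ht : 1 < t)
    (hu : 0 < u) (hv : 0 ≤ v) (hw : 0 ≤ w) (he : 0 ≤ e)
    (h : e / u ≤ 2 / (s + 1) * v + 2 / (t + 1) * w) :
    ((s - 1) / (s + 1)) ^ v * ((t - 1) / (t + 1)) ^ w ≤ (1 - 1 / (u + 1)) ^ e := by
  have hs' : 0 < (s - 1) / (s + 1) := div_pos (by linarith) (by linarith)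
  have ht' : 0 < (t - 1) / (t + 1) := div_pos (by linarith) (by linarith)
  have hu' : 0 < 1 - 1 / (u + 1) := by
    rw [sub_pos, div_lt_one (by linarith)]; linarith
  rw [rpow_def_of_pos hs', rpow_def_of_pos ht', rpow_def_of_pos hu', ← exp_add, exp_le_exp]
  have h₁ := mul_le_mul_of_nonneg_right (log_sub_one_div_add_one_le hs) hv
  have h₂ := mul_le_mul_of_nonneg_right (log_sub_one_div_add_one_le ht) hw
  have h₃ := mul_le_mul_of_nonneg_right (neg_inv_le_log_one_sub_inv_add_one hu) he
  have h₄ : -(1 / u) * e = -(e / u) := by ring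
  linarith

noncomputable def delta (κ γ : ℝ) : ℝ := (γ ^ 2 - κ) / ((γ + κ) * (γ + 1))

section delta

variable {κ γ : ℝ}

lemma delta_nonneg (hκ : 0 ≤ κ) (hγ : 0 ≤ γ) (h : κ ≤ γ ^ 2) : 0 ≤ delta κ γ :=
  div_nonneg (by linarith) (mul_nonneg (by linarith) (by linarith))

lemma delta_le_one (hκ : 0 ≤ κ) (hγ : 0 ≤ γ) : delta κ γ ≤ 1 :=
  div_le_one_of_le₀ (by nlinarith) (by positivity)

lemma div_le_delta (hγ : 1 ≤ γ) (hγκ : γ ≤ κ) (h : 16 * κ ≤ γ ^ 2) :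
    15 * γ / (64 * κ) ≤ delta κ γ :=
  calc 15 * γ / (64 * κ) = 15 / 16 * γ ^ 2 / ((2 * κ) * (2 * γ)) := by
        field_simp; ring
    _ ≤ delta κ γ := by
        apply div_le_div₀ (by linarith) (by linarith) (mul_pos (by linarith) (by linarith))
        gcongr <;> linarith

end delta

section exponent

variable {x γ c d : ℝ}

lemma exponent_bound_of_le_four_mul_sq (hx : 1 < x) (hγ : 0 ≤ γ) (hγx : γ ≤ x ^ 3)
    (hγ4 : γ ≤ 4 * x ^ 2) (hc : 3 / 4 ≤ c) (hd : 0 ≤ d) (hd1 : d ≤ 1) :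
    0.209 / x ^ 2 ≤ 2 / (γ + 1) * (c / (c + d)) := by
  -- `x³ + 1 - (65/16) x² = (x - 4)(x² - x/16 - 1/4)`
  have hγ1 : γ + 1 ≤ 65 / 16 * x ^ 2 := by
    rcases le_or_gt x 4 with h | h
    · nlinarith [mul_nonneg (sub_nonneg.2 h) (by nlinarith : 0 ≤ x ^ 2 - x / 16 - 1 / 4)]
    · nlinarith
  have hw : 3 / 7 ≤ c / (c + d) := by
    rw [le_div_iff₀ (by linarith)]; linarith
  calc 0.209 / x ^ 2 ≤ 2 * (3 / 7) / (65 / 16 * x ^ 2) := by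
        rw [div_le_div_iff₀ (by positivity) (by positivity)]; nlinarith
    _ ≤ 2 * (3 / 7) / (γ + 1) := by gcongr
    _ ≤ 2 / (γ + 1) * (c / (c + d)) := by
        rw [mul_div_right_comm]; gcongr

lemma exponent_bound_of_four_mul_sq_lt (hx : 1 < x) (hγ4 : 4 * x ^ 2 < γ) (hc : 0 ≤ c) (hc1 : c ≤ 1)
    (hd : 15 * γ / (64 * x ^ 3) ≤ d) (hd1 : d ≤ 1) :
    0.209 / x ^ 2 ≤ 2 / (√γ + 1) * (d / (c + d)) := by
  have hγ : 0 < γ := lt_of_le_of_lt (by positivity) hγ4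
  have hsqrt : 2 * x < √γ := lt_sqrt_of_sq_lt (by linarith)
  calc 0.209 / x ^ 2 ≤ 15 * (2 * x) / (128 * x ^ 3) := by
        rw [div_le_div_iff₀ (by positivity) (by positivity)]; nlinarith
    _ ≤ 15 * √γ / (128 * x ^ 3) := by gcongr
    _ = 1 / √γ * (15 * γ / (64 * x ^ 3) / 2) := by
        field_simp; rw [sq_sqrt hγ.le]; ring
    _ ≤ 2 / (√γ + 1) * (d / (c + d)) := by
        have hd0 : 0 < d := lt_of_lt_of_le (by positivity) hd
        refine mul_le_mul ?_ ?_ (by positivity) (by positivity)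
        · rw [div_le_div_iff₀ (by positivity) (by positivity)]; linarith
        · exact (div_le_div_of_nonneg_right hd (by norm_num)).trans
            (div_le_div_of_nonneg_left hd0.le (by linarith) (by linarith))

lemma exponent_bound (hx : 1 < x) (hγ : 1 ≤ γ) (hγsq : x ^ 3 ≤ γ ^ 2) (hγx : γ ≤ x ^ 3)
    (hc : 3 / 4 ≤ c) (hc1 : c ≤ 1) :
    0.209 / x ^ 2 ≤ 2 / (γ + 1) * (c / (c + delta (x ^ 3) γ)) +
      2 / (√γ + 1) * (delta (x ^ 3) γ / (c + delta (x ^ 3) γ)) := by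
  have hd := delta_nonneg (by positivity) (by linarith) hγsq
  have hd1 := delta_le_one (by positivity : 0 ≤ x ^ 3) (by linarith : 0 ≤ γ)
  have h₁ : 0 ≤ 2 / (γ + 1) * (c / (c + delta (x ^ 3) γ)) := by
    have := div_nonneg (by linarith : 0 ≤ c) (by linarith : 0 ≤ c + delta (x ^ 3) γ)
    positivity
  have h₂ : 0 ≤ 2 / (√γ + 1) * (delta (x ^ 3) γ / (c + delta (x ^ 3) γ)) := by
    have := div_nonneg hd (by linarith : 0 ≤ c + delta (x ^ 3) γ)
    positivity
  rcases le_or_gt γ (4 * x ^ 2) with hγ4 | hγ4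
  · linarith [exponent_bound_of_le_four_mul_sq hx (by linarith) hγx hγ4 hc hd hd1]
  · have h16 : 16 * x ^ 3 ≤ γ ^ 2 := by nlinarith
    linarith [exponent_bound_of_four_mul_sq_lt hx hγ4 (by linarith) hc1
      (div_le_delta hγ hγx h16) hd1]

end exponent

end ConvergenceFactor

open ConvergenceFactor

/-- Convergence-factor bound: for `κ > 1`, `c₀ = log(1+√2)`,
`γ ∈ [√κ, κ]`, and `δ(γ) = (γ²-κ)/((γ+κ)(γ+1))`, one has
`((γ-1)/(γ+1))^(c₀/(c₀+δ)) · ((√γ-1)/(√γ+1))^(δ/(c₀+δ)) ≤ (1 - 1/(κ^(2/3)+1))^0.209`. -/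
theorem convergence_factor_bound (κ γ : ℝ) (hκ : 1 < κ)
    (hγ1 : Real.sqrt κ ≤ γ) (hγ2 : γ ≤ κ) :
    ((γ - 1) / (γ + 1)) ^
        (Real.log (1 + Real.sqrt 2) /
          (Real.log (1 + Real.sqrt 2) + (γ ^ 2 - κ) / ((γ + κ) * (γ + 1)))) *
      ((Real.sqrt γ - 1) / (Real.sqrt γ + 1)) ^
        ((γ ^ 2 - κ) / ((γ + κ) * (γ + 1)) /
          (Real.log (1 + Real.sqrt 2) + (γ ^ 2 - κ) / ((γ + κ) * (γ + 1)))) ≤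
      (1 - 1 / (κ ^ ((2 : ℝ) / 3) + 1)) ^ (0.209 : ℝ) := by
  obtain ⟨x, hx, rfl⟩ : ∃ x : ℝ, 1 < x ∧ x ^ 3 = κ :=
    ⟨κ ^ ((3 : ℕ)⁻¹ : ℝ), one_lt_rpow hκ (by positivity),
      rpow_inv_natCast_pow (by linarith) (by norm_num)⟩
  have hγ : 1 < γ := (lt_sqrt_of_sq_lt (by linarith)).trans_le hγ1
  have hγsq : x ^ 3 ≤ γ ^ 2 := (sqrt_le_left (by linarith)).1 hγ1
  have hpow : (x ^ 3) ^ ((2 : ℝ) / 3) = x ^ 2 := by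
    rw [← rpow_natCast, ← rpow_mul (by positivity)]; norm_num
  have hc := three_quarters_le_log_one_add_sqrt_two
  have hd : 0 ≤ (γ ^ 2 - x ^ 3) / ((γ + x ^ 3) * (γ + 1)) :=
    delta_nonneg (by positivity) (by linarith) hγsq
  rw [hpow]
  exact sub_one_div_add_one_rpow_mul_rpow_le hγ (lt_sqrt_of_sq_lt (by linarith)) (by positivity)
    (div_nonneg (by linarith) (by linarith)) (div_nonneg hd (by linarith)) (by norm_num)
    (exponent_bound hx hγ.le hγsq hγ2 hc log_one_add_sqrt_two_le_one)
end

section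
/- Let J = blkdiag(I_n, -I_m) and K a real (n+m)×(n+m) matrix that is J-symmetric, i.e., (JK)ᵀ = JK. Suppose there exists a nonzero real scalar η such that H = ηJK is symmetric positive definite. Then K is diagonalizable with purely real eigenvalues, and there is an invertible X with K = X Λ X⁻¹ and ‖X‖·‖X⁻¹‖ ≤ √(‖H‖·‖H⁻¹‖). -/
/-!
Write `K = (η⁻¹ • J) * H` with `η⁻¹ • J` symmetric and `H` positive definite. With `W = √H`,
`W K W⁻¹ = W (η⁻¹ • J) W` is symmetric, hence `V Λ Vᵀ` with `V` orthogonal, and `X = W⁻¹ V`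
diagonalizes `K`. As `V` is an isometry, `‖X‖ = ‖W⁻¹‖` and `‖X⁻¹‖ = ‖W‖`; the C⋆-identity
`‖W‖² = ‖W W‖ = ‖H‖` (and likewise for `W⁻¹`) turns this into `√(‖H‖ ‖H⁻¹‖)`.
-/

open scoped Matrix Matrix.Norms.L2Operator MatrixOrder ComplexOrder

namespace Matrix

variable {𝕜 ι : Type*} [RCLike 𝕜] [Fintype ι] [DecidableEq ι]

lemma IsHermitian.norm_mul_norm_inv {W : Matrix ι ι 𝕜} (hW : W.IsHermitian) :
    ‖W‖ * ‖W⁻¹‖ = √(‖W * W‖ * ‖(W * W)⁻¹‖) := by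
  rw [mul_inv_rev, hW.isSelfAdjoint.norm_mul_self, hW.inv.isSelfAdjoint.norm_mul_self, ← mul_pow,
    Real.sqrt_sq (by positivity)]

theorem IsHermitian.exists_mul_posDef_eq_mul_diagonal_mul_inv {A H : Matrix ι ι 𝕜}
    (hA : A.IsHermitian) (hH : H.PosDef) :
    ∃ (X : Matrix ι ι 𝕜) (Λ : ι → ℝ), IsUnit X.det ∧
      A * H = X * diagonal (fun i => (Λ i : 𝕜)) * X⁻¹ ∧
      ‖X‖ * ‖X⁻¹‖ = √(‖H‖ * ‖H⁻¹‖) := by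
  set W := CFC.sqrt H
  have hWW : W * W = H := CFC.sqrt_mul_sqrt_self H hH.posSemidef.nonneg
  have hWherm : W.IsHermitian := (CFC.sqrt_nonneg H).isSelfAdjoint
  have hW : IsUnit W.det := (isUnit_iff_isUnit_det W).mp <|
    (CFC.isUnit_sqrt_iff H hH.posSemidef.nonneg).mpr hH.isUnit
  have hS : (W * A * W).IsHermitian := by
    simpa only [hWherm.eq] using isHermitian_conjTranspose_mul_mul W hA
  obtain ⟨U, Λ, hspec⟩ : ∃ (U : unitaryGroup ι 𝕜) (Λ : ι → ℝ),
      W * A * W = U * diagonal (fun i => (Λ i : 𝕜)) * star (U : Matrix ι ι 𝕜) :=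
    ⟨_, _, hS.spectral_theorem⟩
  have hX_mul_inv : W⁻¹ * U * (star (U : Matrix ι ι 𝕜) * W) = 1 := by
    simp [mul_assoc, ← mul_assoc (U : Matrix ι ι 𝕜), nonsing_inv_mul W hW]
  have hXinv : (W⁻¹ * U)⁻¹ = star (U : Matrix ι ι 𝕜) * W := inv_eq_right_inv hX_mul_inv
  refine ⟨W⁻¹ * U, Λ, isUnit_det_of_right_inverse hX_mul_inv, ?_, ?_⟩
  · calc A * H = W⁻¹ * (W * A * W) * W := by
          rw [← hWW]; simp only [← mul_assoc, nonsing_inv_mul W hW, one_mul]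
      _ = _ := by rw [hspec, hXinv]; simp only [mul_assoc]
  · rw [hXinv, CStarRing.norm_mul_mem_unitary _ U.2,
      CStarRing.norm_mem_unitary_mul _ (Unitary.star_mem U.2), mul_comm,
      hWherm.norm_mul_norm_inv, hWW]

end Matrix

theorem Jsymmetric_posdef_real_diagonalizable_general (n m : ℕ)
    (K : Matrix (Fin n ⊕ Fin m) (Fin n ⊕ Fin m) ℝ)
    (J : Matrix (Fin n ⊕ Fin m) (Fin n ⊕ Fin m) ℝ)
    (hJ : J = Matrix.fromBlocks 1 0 0 (-1))
    (η : ℝ) (hη : η ≠ 0)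
    (H : Matrix (Fin n ⊕ Fin m) (Fin n ⊕ Fin m) ℝ)
    (hH : H = η • (J * K)) (hpd : H.PosDef) :
    ∃ (X : Matrix (Fin n ⊕ Fin m) (Fin n ⊕ Fin m) ℝ)
      (Λ : (Fin n ⊕ Fin m) → ℝ),
      IsUnit X.det ∧ K = X * Matrix.diagonal Λ * X⁻¹ ∧
      ‖X‖ * ‖X⁻¹‖ ≤ Real.sqrt (‖H‖ * ‖H⁻¹‖) := by
  have hJJ : J * J = 1 := by simp [hJ, Matrix.fromBlocks_multiply]
  have hJherm : (η⁻¹ • J).IsHermitian := by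
    refine Matrix.IsHermitian.smul ?_ (IsSelfAdjoint.all η⁻¹)
    simp [hJ, Matrix.IsHermitian, Matrix.fromBlocks_transpose]
  have hK : K = η⁻¹ • J * H := by
    rw [hH, Matrix.smul_mul, Matrix.mul_smul, ← mul_assoc, hJJ, one_mul, smul_smul,
      inv_mul_cancel₀ hη, one_smul]
  obtain ⟨X, Λ, hX, hKX, hκ⟩ := hJherm.exists_mul_posDef_eq_mul_diagonal_mul_inv hpd
  exact ⟨X, Λ, hX, hK.trans hKX, hκ.le⟩

/-- Let `J = blkdiag(I_n, -I_m)` and `K` a real `(n+m)×(n+m)` matrix that is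
`J`-symmetric, i.e. `(J*K)ᵀ = J*K`. Suppose there is a nonzero real `η` such
that `H = η • (J*K)` is positive definite. Then `K` is diagonalizable with
purely real eigenvalues via an invertible `X` with
`‖X‖·‖X⁻¹‖ ≤ √(‖H‖·‖H⁻¹‖)` (spectral norms). -/
theorem Jsymmetric_posdef_real_diagonalizable (n m : ℕ)
    (K : Matrix (Fin n ⊕ Fin m) (Fin n ⊕ Fin m) ℝ)
    (J : Matrix (Fin n ⊕ Fin m) (Fin n ⊕ Fin m) ℝ)
    (hJ : J = Matrix.fromBlocks 1 0 0 (-1))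
    (hsym : (J * K)ᵀ = J * K)
    (η : ℝ) (hη : η ≠ 0)
    (H : Matrix (Fin n ⊕ Fin m) (Fin n ⊕ Fin m) ℝ)
    (hH : H = η • (J * K)) (hpd : H.PosDef) :
    ∃ (X : Matrix (Fin n ⊕ Fin m) (Fin n ⊕ Fin m) ℝ)
      (Λ : (Fin n ⊕ Fin m) → ℝ),
      IsUnit X.det ∧ K = X * Matrix.diagonal Λ * X⁻¹ ∧
      ‖X‖ * ‖X⁻¹‖ ≤ Real.sqrt (‖H‖ * ‖H⁻¹‖) :=
  Jsymmetric_posdef_real_diagonalizable_general n m K J hJ η hη H hH hpd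
end

section
/- Let J = blkdiag(I_n, -I_m) and let K be J-symmetric ((JK)ᵀ = JK). If λ is an eigenvalue of K with nonzero imaginary part and eigenvector x, then x*Jx = 0 (the eigenvector is J-neutral), and consequently |λ| ≤ min_{η ∈ ℝ} ‖K + ηJ‖ in spectral norm. -/
open scoped Matrix Matrix.Norms.L2Operator

/-!
Since `J` and `JK` are symmetric, `x* J x` and `x* (JK) x = λ · x* J x` are both real, and as `λ` is
not real this forces `x* J x = 0`. Hence `x* (K + ηJ) x = λ · x* x` for every real `η`, and the
Cauchy–Schwarz bound on this quadratic form gives `|λ| ≤ ‖K + ηJ‖`: a real matrix has the same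
bound on `ℂᴺ` as on `ℝᴺ`, because it acts on real and imaginary parts separately.
-/

open WithLp

lemma EuclideanSpace.norm_toLp_sq_eq_re_add_im {n : Type*} [Fintype n] (x : n → ℂ) :
    ‖toLp 2 x‖ ^ 2 = ‖toLp 2 fun i ↦ (x i).re‖ ^ 2 + ‖toLp 2 fun i ↦ (x i).im‖ ^ 2 := by
  simp only [EuclideanSpace.real_norm_sq_eq, EuclideanSpace.norm_sq_eq, ← Finset.sum_add_distrib,
    Complex.sq_norm, Complex.normSq_apply]
  congr! 1 with i; ring

namespace Matrix

section RCLike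

variable {𝕜 n : Type*} [RCLike 𝕜] [Fintype n]

lemma star_dotProduct_self_eq_norm_sq (x : n → 𝕜) :
    star x ⬝ᵥ x = (‖toLp 2 x‖ : 𝕜) ^ 2 := by
  rw [dotProduct_comm, ← EuclideanSpace.inner_toLp_toLp, inner_self_eq_norm_sq_to_K]

lemma norm_star_dotProduct_mulVec_le [DecidableEq n] (A : Matrix n n 𝕜) (x : n → 𝕜) :
    ‖star x ⬝ᵥ A *ᵥ x‖ ≤ ‖A‖ * ‖toLp 2 x‖ ^ 2 :=
  calc ‖star x ⬝ᵥ A *ᵥ x‖ = ‖inner 𝕜 (toLp 2 x) (toLp 2 (A *ᵥ x))‖ := by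
        rw [EuclideanSpace.inner_toLp_toLp, dotProduct_comm]
    _ ≤ ‖toLp 2 x‖ * ‖toLp 2 (A *ᵥ x)‖ := norm_inner_le_norm _ _
    _ ≤ ‖toLp 2 x‖ * (‖A‖ * ‖toLp 2 x‖) := by
        gcongr; exact A.l2_opNorm_mulVec (toLp 2 x)
    _ = ‖A‖ * ‖toLp 2 x‖ ^ 2 := by ring

lemma norm_le_l2_opNorm_of_star_dotProduct_mulVec_eq [DecidableEq n] {A : Matrix n n 𝕜}
    {x : n → 𝕜} (hx : x ≠ 0) {μ : 𝕜} (h : star x ⬝ᵥ A *ᵥ x = μ * (star x ⬝ᵥ x)) :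
    ‖μ‖ ≤ ‖A‖ := by
  have hpos : 0 < ‖toLp 2 x‖ ^ 2 := by
    have : toLp 2 x ≠ 0 := by simpa using hx
    positivity
  refine le_of_mul_le_mul_right ?_ hpos
  calc ‖μ‖ * ‖toLp 2 x‖ ^ 2 = ‖star x ⬝ᵥ A *ᵥ x‖ := by
        rw [h, star_dotProduct_self_eq_norm_sq, norm_mul, norm_pow, RCLike.norm_ofReal, abs_norm]
    _ ≤ ‖A‖ * ‖toLp 2 x‖ ^ 2 := A.norm_star_dotProduct_mulVec_le x

lemma IsHermitian.star_dotProduct_mulVec_eq_zero_of_mulVec_eq_smul {J K : Matrix n n 𝕜}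
    (hJ : J.IsHermitian) (hJK : (J * K).IsHermitian) {μ : 𝕜} (hμ : RCLike.im μ ≠ 0)
    {x : n → 𝕜} (hx : K *ᵥ x = μ • x) : star x ⬝ᵥ J *ᵥ x = 0 := by
  have hJK_form : star x ⬝ᵥ (J * K) *ᵥ x = μ * (star x ⬝ᵥ J *ᵥ x) := by
    rw [← mulVec_mulVec, hx, mulVec_smul, dotProduct_smul, smul_eq_mul]
  have hJ_im := hJ.im_star_dotProduct_mulVec_self x
  have hJK_im := hJK.im_star_dotProduct_mulVec_self x
  rw [hJK_form, RCLike.mul_im, hJ_im, mul_zero, zero_add, mul_eq_zero] at hJK_im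
  exact RCLike.ext (by simpa using hJK_im.resolve_left hμ) (by simpa using hJ_im)

end RCLike

section Complexification

variable {m n : Type*}

lemma IsSymm.isHermitian_map_ofReal {A : Matrix n n ℝ} (h : A.IsSymm) :
    (A.map Complex.ofReal).IsHermitian :=
  (isHermitian_iff_isSymm.mpr h).map _ fun _ ↦ (Complex.conj_ofReal _).symm

variable [Fintype n]

lemma re_map_ofReal_mulVec (M : Matrix m n ℝ) (x : n → ℂ) (i : m) :
    ((M.map Complex.ofReal *ᵥ x) i).re = (M *ᵥ fun j ↦ (x j).re) i := by
  simp [mulVec, dotProduct, Complex.re_sum]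

lemma im_map_ofReal_mulVec (M : Matrix m n ℝ) (x : n → ℂ) (i : m) :
    ((M.map Complex.ofReal *ᵥ x) i).im = (M *ᵥ fun j ↦ (x j).im) i := by
  simp [mulVec, dotProduct, Complex.im_sum]

lemma l2_opNorm_map_ofReal_le [Fintype m] [DecidableEq n] (M : Matrix m n ℝ) :
    ‖M.map Complex.ofReal‖ ≤ ‖M‖ := by
  rw [l2_opNorm_def]
  refine ContinuousLinearMap.opNorm_le_bound _ (norm_nonneg _) fun x ↦ ?_
  have hM (u : n → ℝ) : ‖toLp 2 (M *ᵥ u)‖ ^ 2 ≤ ‖M‖ ^ 2 * ‖toLp 2 u‖ ^ 2 := by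
    rw [← mul_pow]
    gcongr
    exact M.l2_opNorm_mulVec (toLp 2 u)
  change ‖toLp 2 (M.map Complex.ofReal *ᵥ x.ofLp)‖ ≤ _
  rw [← pow_le_pow_iff_left₀ (norm_nonneg _) (by positivity) two_ne_zero, mul_pow,
    ← x.toLp_ofLp, EuclideanSpace.norm_toLp_sq_eq_re_add_im,
    EuclideanSpace.norm_toLp_sq_eq_re_add_im, mul_add]
  simp only [re_map_ofReal_mulVec, im_map_ofReal_mulVec]
  exact add_le_add (hM _) (hM _)

end Complexification

end Matrix

/-- Let `J = blkdiag(I_n, -I_m)` and `K` be `J`-symmetric (`(J*K)ᵀ = J*K`).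
If `λ` is an eigenvalue of `K` with nonzero imaginary part and eigenvector `x`,
then `x* J x = 0` (the eigenvector is `J`-neutral), and consequently
`|λ| ≤ ‖K + η•J‖` in spectral norm for every real `η`. -/
theorem Jsymmetric_complex_eigenvalue_bound (n m : ℕ)
    (K : Matrix (Fin n ⊕ Fin m) (Fin n ⊕ Fin m) ℝ)
    (J : Matrix (Fin n ⊕ Fin m) (Fin n ⊕ Fin m) ℝ)
    (hJ : J = Matrix.fromBlocks 1 0 0 (-1))
    (hsym : (J * K)ᵀ = J * K)
    (lam : ℂ) (hlam : lam.im ≠ 0)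
    (x : (Fin n ⊕ Fin m) → ℂ) (hx : x ≠ 0)
    (heig : (K.map (Complex.ofReal)) *ᵥ x = lam • x) :
    dotProduct (star x) ((J.map (Complex.ofReal)) *ᵥ x) = 0 ∧
    ∀ η : ℝ, ‖lam‖ ≤ ‖K + η • J‖ := by
  have hJ_symm : J.IsSymm := by subst hJ; simp [Matrix.IsSymm, Matrix.fromBlocks_transpose]
  have hJK_herm : (J.map Complex.ofReal * K.map Complex.ofReal).IsHermitian := by
    convert Matrix.IsSymm.isHermitian_map_ofReal hsym using 1
    exact (Matrix.map_mul (f := Complex.ofRealHom)).symm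
  have hneutral := hJ_symm.isHermitian_map_ofReal.star_dotProduct_mulVec_eq_zero_of_mulVec_eq_smul
    hJK_herm hlam heig
  refine ⟨hneutral, fun η ↦ ?_⟩
  have hηJ : (η • J).map Complex.ofReal = η • J.map Complex.ofReal :=
    Matrix.map_smul _ η (fun a ↦ by simp [Complex.real_smul]) J
  have hform : star x ⬝ᵥ (K + η • J).map Complex.ofReal *ᵥ x = lam * (star x ⬝ᵥ x) := by
    simp [Matrix.map_add, hηJ, Matrix.add_mulVec, Matrix.smul_mulVec, hneutral, heig]
  exact (Matrix.norm_le_l2_opNorm_of_star_dotProduct_mulVec_eq hx hform).trans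
    (Matrix.l2_opNorm_map_ofReal_le _)
end

section
/- Let D̃ be a real symmetric positive definite n×n matrix with eigenvalues in [m, ℓ], 0 < m ≤ ℓ, and for β > 0 define K̃ = (β⁻¹D̃ + I)⁻¹ − (βD̃⁻¹ + I)⁻¹. Then K̃ is symmetric and ‖K̃‖ = (γ-1)/(γ+1) where γ = max{β/m, ℓ/β}. -/
/-!
With `g λ = (β - λ) / (β + λ)`, both resolvent-type terms are functions of `D̃`, so
`K̃ = g(D̃)` in the continuous functional calculus; it is therefore self-adjoint. For matrices
with the `L²` operator norm that calculus is isometric, so `‖K̃‖` is the maximum of `|g|` over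
the spectrum. As `g` decreases, this maximum sits at `m` or at `ℓ`, where
`|g| = (t - 1) / (t + 1)` with `t = β / m`, resp. `t = ℓ / β`.
-/

open scoped Matrix Matrix.Norms.L2Operator Ring

section CFC

variable {A : Type*} {p : A → Prop} [Ring A] [StarRing A] [TopologicalSpace A] [Algebra ℝ A]
  [ContinuousFunctionalCalculus ℝ A p]

theorem cfc_inv_const_mul_add_one (f : ℝ → ℝ) (a : A) (c : ℝ)
    (hf' : ∀ x ∈ spectrum ℝ a, c * f x + 1 ≠ 0)
    (hf : ContinuousOn f (spectrum ℝ a) := by cfc_cont_tac) (ha : p a := by cfc_tac) :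
    cfc (fun x ↦ (c * f x + 1)⁻¹) a = (c • cfc f a + 1)⁻¹ʳ := by
  rw [cfc_inv _ a hf', cfc_add .., cfc_const_mul .., cfc_const_one ℝ a]

theorem cfc_sub_div_add (a : A) (ha : p a) (hpos : ∀ x ∈ spectrum ℝ a, 0 < x) {β : ℝ}
    (hβ : 0 < β) :
    cfc (fun x ↦ (β - x) / (β + x)) a = (β⁻¹ • a + 1)⁻¹ʳ - (β • a⁻¹ʳ + 1)⁻¹ʳ := by
  have hne₁ : ∀ x ∈ spectrum ℝ a, β⁻¹ * x + 1 ≠ 0 := fun x hx ↦ by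
    have := hpos x hx; positivity
  have hne₂ : ∀ x ∈ spectrum ℝ a, β * x⁻¹ + 1 ≠ 0 := fun x hx ↦ by
    have := hpos x hx; positivity
  have hinv : ContinuousOn (fun x : ℝ ↦ x⁻¹) (spectrum ℝ a) :=
    continuousOn_id.inv₀ fun x hx ↦ (hpos x hx).ne'
  have hcont₁ : ContinuousOn (fun x : ℝ ↦ (β⁻¹ * x + 1)⁻¹) (spectrum ℝ a) :=
    (by fun_prop : Continuous fun x : ℝ ↦ β⁻¹ * x + 1).continuousOn.inv₀ hne₁
  have hcont₂ : ContinuousOn (fun x : ℝ ↦ (β * x⁻¹ + 1)⁻¹) (spectrum ℝ a) :=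
    ((continuousOn_const.mul hinv).add continuousOn_const).inv₀ hne₂
  have hid : cfc (fun x : ℝ ↦ x) a = a := cfc_id' ℝ a
  have hainv : cfc (fun x : ℝ ↦ x⁻¹) a = a⁻¹ʳ := by
    simpa only [hid] using cfc_inv (fun x : ℝ ↦ x) a fun x hx ↦ (hpos x hx).ne'
  nth_rw 2 [← hid]
  rw [← hainv, ← cfc_inv_const_mul_add_one _ _ _ hne₁, ← cfc_inv_const_mul_add_one _ _ _ hne₂,
    ← cfc_sub _ _ a hcont₁ hcont₂]
  refine cfc_congr fun x hx ↦ ?_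
  have := hpos x hx
  field_simp
  ring

end CFC

theorem abs_sub_div_add_eq {a b : ℝ} (ha : 0 < a) (hab : a ≤ b) :
    |(b - a) / (b + a)| = (b / a - 1) / (b / a + 1) := by
  rw [abs_of_nonneg (div_nonneg (by linarith) (by linarith))]
  field_simp

section Bounds

variable {m ℓ β : ℝ}

theorem abs_sub_div_add_le (hm : 0 < m) (hβ : 0 < β) {x : ℝ} (hx : x ∈ Set.Icc m ℓ) :
    |(β - x) / (β + x)| ≤ (max (β / m) (ℓ / β) - 1) / (max (β / m) (ℓ / β) + 1) := by
  set γ := max (β / m) (ℓ / β)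
  have hγm : β ≤ γ * m := (div_le_iff₀ hm).1 (le_max_left _ _)
  have hγℓ : ℓ ≤ γ * β := (div_le_iff₀ hβ).1 (le_max_right _ _)
  have hγ : 0 ≤ γ := (div_pos hβ hm).le.trans (le_max_left _ _)
  obtain ⟨hmx, hxℓ⟩ := hx
  rw [abs_div, abs_of_pos (by linarith : 0 < β + x), div_le_div_iff₀ (by linarith) (by linarith)]
  rcases abs_cases (β - x) with ⟨h, _⟩ | ⟨h, _⟩ <;> rw [h] <;> nlinarith

theorem isGreatest_image_abs_sub_div_add {S : Set ℝ} (hm : 0 < m) (hβ : 0 < β)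
    (hS : S ⊆ Set.Icc m ℓ) (hmS : m ∈ S) (hℓS : ℓ ∈ S) :
    IsGreatest ((fun x ↦ |(β - x) / (β + x)|) '' S)
      ((max (β / m) (ℓ / β) - 1) / (max (β / m) (ℓ / β) + 1)) := by
  refine ⟨?_, Set.forall_mem_image.2 fun x hx ↦ abs_sub_div_add_le hm hβ (hS hx)⟩
  have hmℓ : m ≤ ℓ := (hS hℓS).1
  rcases le_total (ℓ / β) (β / m) with h | h
  · have hmβ : m ≤ β := by
      rw [div_le_div_iff₀ hβ hm] at h
      nlinarith
    refine ⟨m, hmS, ?_⟩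
    rw [max_eq_left h]
    exact abs_sub_div_add_eq hm hmβ
  · have hβℓ : β ≤ ℓ := by
      rw [div_le_div_iff₀ hm hβ] at h
      nlinarith
    refine ⟨ℓ, hℓS, ?_⟩
    rw [max_eq_right h, ← abs_sub_div_add_eq hβ hβℓ, ← abs_neg, ← neg_div, neg_sub, add_comm]

end Bounds

theorem Ktilde_symm_and_norm_general (n : ℕ) (D : Matrix (Fin n) (Fin n) ℝ)
    (hD : D.IsHermitian)
    (m ℓ : ℝ) (hm : 0 < m)
    (hbound : ∀ i, hD.eigenvalues i ∈ Set.Icc m ℓ)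
    (hmin : ∃ i, hD.eigenvalues i = m) (hmax : ∃ i, hD.eigenvalues i = ℓ)
    (β : ℝ) (hβ : 0 < β) :
    ((β⁻¹ • D + 1)⁻¹ - (β • D⁻¹ + 1)⁻¹).IsHermitian ∧
    ‖(β⁻¹ • D + 1)⁻¹ - (β • D⁻¹ + 1)⁻¹‖ =
      (max (β / m) (ℓ / β) - 1) / (max (β / m) (ℓ / β) + 1) := by
  have hspec := hD.spectrum_real_eq_range_eigenvalues
  have hS : spectrum ℝ D ⊆ Set.Icc m ℓ := hspec ▸ Set.range_subset_iff.2 hbound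
  have hpos : ∀ x ∈ spectrum ℝ D, 0 < x := fun x hx ↦ hm.trans_le (hS hx).1
  have hK : (β⁻¹ • D + 1)⁻¹ - (β • D⁻¹ + 1)⁻¹ = cfc (fun x ↦ (β - x) / (β + x)) D := by
    simpa only [Matrix.nonsing_inv_eq_ringInverse] using
      (cfc_sub_div_add D hD.isSelfAdjoint hpos hβ).symm
  have hcont : ContinuousOn (fun x : ℝ ↦ (β - x) / (β + x)) (spectrum ℝ D) :=
    (by fun_prop : Continuous fun x : ℝ ↦ β - x).continuousOn.div (by fun_prop)
      fun x hx ↦ (add_pos hβ (hpos x hx)).ne'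
  have : Nonempty (Fin n) := let ⟨i, _⟩ := hmin; ⟨i⟩
  have hnorm := IsGreatest.norm_cfc _ D hcont hD.isSelfAdjoint
  simp only [Real.norm_eq_abs] at hnorm
  rw [hK]
  exact ⟨(cfc_predicate _ D : IsSelfAdjoint _).isHermitian,
    hnorm.unique (isGreatest_image_abs_sub_div_add hm hβ hS (hspec ▸ hmin) (hspec ▸ hmax))⟩

/-- Let `D̃` be real symmetric positive definite with extreme eigenvalues
`m ≤ ℓ` (`0 < m`), and for `β > 0` define
`K̃ = (β⁻¹•D̃ + I)⁻¹ − (β•D̃⁻¹ + I)⁻¹`. Then `K̃` is symmetric and its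
spectral norm is `(γ-1)/(γ+1)` where `γ = max{β/m, ℓ/β}`. -/
theorem Ktilde_symm_and_norm (n : ℕ) (D : Matrix (Fin n) (Fin n) ℝ)
    (hD : D.IsHermitian) (hpd : D.PosDef)
    (m ℓ : ℝ) (hm : 0 < m) (hmℓ : m ≤ ℓ)
    (hbound : ∀ i, hD.eigenvalues i ∈ Set.Icc m ℓ)
    (hmin : ∃ i, hD.eigenvalues i = m) (hmax : ∃ i, hD.eigenvalues i = ℓ)
    (β : ℝ) (hβ : 0 < β) :
    ((β⁻¹ • D + 1)⁻¹ - (β • D⁻¹ + 1)⁻¹).IsHermitian ∧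
    ‖(β⁻¹ • D + 1)⁻¹ - (β • D⁻¹ + 1)⁻¹‖ =
      (max (β / m) (ℓ / β) - 1) / (max (β / m) (ℓ / β) + 1) :=
  Ktilde_symm_and_norm_general n D hD m ℓ hm hbound hmin hmax β hβ
end

section
/- Let D̃ be symmetric positive definite with eigenvalues in [m, ℓ], 0 < m ≤ ℓ, κ = ℓ/m, β > 0, γ = max{β/m, ℓ/β}, and K̃ = (β⁻¹D̃+I)⁻¹ − (βD̃⁻¹+I)⁻¹. Then min_{η ∈ ℝ} ‖K̃ − ηI‖ ≤ κ/(γ+κ) − 1/(γ+1). -/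
/-!
By the functional calculus, `K̃ - η • 1 = g D̃ - η • 1` with `g x = (β - x) / (β + x)`, so its norm
is the largest `|g λ - η|` over the eigenvalues `λ ∈ [m, ℓ]`. As `g` is decreasing, these values lie
in `[g ℓ, g m]`; centring at the midpoint bounds the norm by the half-width `(g m - g ℓ) / 2`,
which equals `κ / (γ + κ) - 1 / (γ + 1)` for either of the two values `β / m`, `ℓ / β` of `γ`.
-/

open scoped Matrix Matrix.Norms.L2Operator

namespace Matrix

variable {𝕜 : Type*} [RCLike 𝕜] {n : Type*} [Fintype n] [DecidableEq n]

theorem IsHermitian.norm_cfc_le {A : Matrix n n 𝕜} (hA : A.IsHermitian) (f : ℝ → ℝ) {c : ℝ}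
    (hc : 0 ≤ c) (h : ∀ x ∈ spectrum ℝ A, |f x| ≤ c) : ‖cfc f A‖ ≤ c := by
  rw [hA.cfc_eq, IsHermitian.cfc, Unitary.conjStarAlgAut_apply,
    CStarRing.norm_mul_mem_unitary _ (Unitary.star_mem hA.eigenvectorUnitary.2),
    CStarRing.norm_coe_unitary_mul, l2_opNorm_diagonal, pi_norm_le_iff_of_nonneg hc]
  intro i
  simpa using h _ (hA.eigenvalues_mem_spectrum_real i)

theorem cfc_inv_eq_nonsing_inv {A : Matrix n n 𝕜} (hA : IsSelfAdjoint A) (f : ℝ → ℝ)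
    (hf : ∀ x ∈ spectrum ℝ A, f x ≠ 0) : cfc (fun x ↦ (f x)⁻¹) A = (cfc f A)⁻¹ := by
  rw [cfc_inv f A hf (A.finite_real_spectrum.continuousOn f), nonsing_inv_eq_ringInverse]

theorem cfc_sub_div_add {A : Matrix n n 𝕜} (hA : IsSelfAdjoint A) {β : ℝ} (hβ : 0 < β)
    (hpos : ∀ x ∈ spectrum ℝ A, 0 < x) :
    cfc (fun x ↦ (β - x) / (β + x)) A = (β⁻¹ • A + 1)⁻¹ - (β • A⁻¹ + 1)⁻¹ := by
  have hcont (f : ℝ → ℝ) : ContinuousOn f (spectrum ℝ A) := A.finite_real_spectrum.continuousOn f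
  have hinv : A⁻¹ = cfc (fun x : ℝ ↦ x⁻¹) A := by
    rw [cfc_inv_eq_nonsing_inv hA (fun x ↦ x) fun x hx ↦ (hpos x hx).ne', cfc_id' ℝ A hA]
  have h1 : β⁻¹ • A + 1 = cfc (fun x ↦ β⁻¹ * x + 1) A := by
    rw [cfc_add_const _ _ _ (hcont _) hA, cfc_const_mul_id _ _ hA, map_one]
  have h2 : β • A⁻¹ + 1 = cfc (fun x ↦ β * x⁻¹ + 1) A := by
    rw [cfc_add_const _ _ _ (hcont _) hA, cfc_const_mul _ _ _ (hcont _), hinv, map_one]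
  rw [h1, h2, ← cfc_inv_eq_nonsing_inv hA _ fun x hx ↦ by have := hpos x hx; positivity,
    ← cfc_inv_eq_nonsing_inv hA _ fun x hx ↦ by have := hpos x hx; positivity,
    ← cfc_sub _ _ _ (hcont _) (hcont _)]
  refine cfc_congr fun x hx ↦ ?_
  have := hpos x hx
  field_simp
  ring

theorem cfc_sub_const {A : Matrix n n 𝕜} (hA : IsSelfAdjoint A) (f : ℝ → ℝ) (r : ℝ) :
    cfc (fun x ↦ f x - r) A = cfc f A - r • 1 := by
  rw [cfc_sub _ _ _ (A.finite_real_spectrum.continuousOn f) continuousOn_const, cfc_const r A hA,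
    Algebra.algebraMap_eq_smul_one]

end Matrix

theorem abs_sub_midpoint_le {α : Type*} [Field α] [LinearOrder α] [IsStrictOrderedRing α]
    {a b y : α} (hy : y ∈ Set.Icc a b) : |y - (a + b) / 2| ≤ (b - a) / 2 :=
  abs_le.mpr ⟨by linarith [hy.1, hy.2], by linarith [hy.1, hy.2]⟩

theorem antitoneOn_sub_div_add {β : ℝ} (hβ : 0 ≤ β) :
    AntitoneOn (fun x ↦ (β - x) / (β + x)) (Set.Ioi (-β)) := by
  intro x hx y hy hxy
  simp only [Set.mem_Ioi] at hx hy
  rw [div_le_div_iff₀ (by linarith) (by linarith)]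
  nlinarith [mul_le_mul_of_nonneg_left hxy hβ]

theorem half_width_sub_div_add_eq {m ℓ β γ : ℝ} (hm : 0 < m) (hℓ : 0 < ℓ) (hβ : 0 < β)
    (hγ : γ = β / m ∨ γ = ℓ / β) :
    ((β - m) / (β + m) - (β - ℓ) / (β + ℓ)) / 2 = ℓ / m / (γ + ℓ / m) - 1 / (γ + 1) := by
  rcases hγ with rfl | rfl <;> field_simp <;> ring

theorem Ktilde_centered_norm_bound_general (n : ℕ) (D : Matrix (Fin n) (Fin n) ℝ)
    (hD : D.IsHermitian)
    (m ℓ : ℝ) (hm : 0 < m)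
    (hbound : ∀ i, hD.eigenvalues i ∈ Set.Icc m ℓ)
    (β : ℝ) (hβ1 : m ≤ β) (hβ2 : β ≤ ℓ) :
    ∃ η : ℝ,
      ‖(β⁻¹ • D + 1)⁻¹ - (β • D⁻¹ + 1)⁻¹ - η • (1 : Matrix (Fin n) (Fin n) ℝ)‖ ≤
        (ℓ / m) / (max (β / m) (ℓ / β) + ℓ / m) - 1 / (max (β / m) (ℓ / β) + 1) := by
  have hβ : 0 < β := hm.trans_le hβ1
  have hspec : spectrum ℝ D ⊆ Set.Icc m ℓ := by
    rw [hD.spectrum_real_eq_range_eigenvalues]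
    exact Set.range_subset_iff.mpr hbound
  have hmaps : Set.MapsTo (fun x ↦ (β - x) / (β + x)) (Set.Icc m ℓ)
      (Set.Icc ((β - ℓ) / (β + ℓ)) ((β - m) / (β + m))) :=
    ((antitoneOn_sub_div_add hβ.le).mono fun x hx ↦
      show -β < x by linarith [hx.1]).mapsTo_Icc
  have hgm := hmaps (Set.left_mem_Icc.mpr (hβ1.trans hβ2))
  refine ⟨((β - ℓ) / (β + ℓ) + (β - m) / (β + m)) / 2, ?_⟩
  rw [← half_width_sub_div_add_eq hm (hm.trans_le (hβ1.trans hβ2)) hβ (max_choice _ _),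
    ← Matrix.cfc_sub_div_add hD.isSelfAdjoint hβ fun x hx ↦ hm.trans_le (hspec hx).1,
    ← Matrix.cfc_sub_const hD.isSelfAdjoint]
  exact hD.norm_cfc_le _ (by linarith [hgm.1]) fun x hx ↦
    abs_sub_midpoint_le (hmaps (hspec hx))

/-- Let `D̃` be real symmetric positive definite with extreme eigenvalues
`m ≤ ℓ` (`0 < m`), `κ = ℓ/m`, `m ≤ β ≤ ℓ`, `γ = max{β/m, ℓ/β}`, and
`K̃ = (β⁻¹•D̃ + I)⁻¹ − (β•D̃⁻¹ + I)⁻¹`. Then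
`min_{η∈ℝ} ‖K̃ − η•I‖ ≤ κ/(γ+κ) − 1/(γ+1)` (spectral norm). -/
theorem Ktilde_centered_norm_bound (n : ℕ) (D : Matrix (Fin n) (Fin n) ℝ)
    (hD : D.IsHermitian) (hpd : D.PosDef)
    (m ℓ : ℝ) (hm : 0 < m) (hmℓ : m ≤ ℓ)
    (hbound : ∀ i, hD.eigenvalues i ∈ Set.Icc m ℓ)
    (β : ℝ) (hβ1 : m ≤ β) (hβ2 : β ≤ ℓ) :
    ∃ η : ℝ,
      ‖(β⁻¹ • D + 1)⁻¹ - (β • D⁻¹ + 1)⁻¹ - η • (1 : Matrix (Fin n) (Fin n) ℝ)‖ ≤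
        (ℓ / m) / (max (β / m) (ℓ / β) + ℓ / m) - 1 / (max (β / m) (ℓ / β) + 1) :=
  Ktilde_centered_norm_bound_general n D hD m ℓ hm hbound β hβ1 hβ2
end
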